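/- Let r ≥ 1 and let 𝐬 = (s₁,…,s_r) ∈ 𝔻^r be an index. Then for every odd prime p, the reversal formula Z_p(s_r,…,s₁) = (−1)^{wt(𝐬)}·sgn(𝐬)·Z_p(s₁,…,s_r) holds in ℤ/pℤ. -/

import Mathlib

open Finset

def isgn (a : ℤ) : ℤ := if 0 < a then 1 else -1

def sgnIdx (a : List ℤ) : ℤ := (a.map isgn).prod

def Zp (p : ℕ) (a : List ℤ) : ZMod p :=
  ∑ m ∈ ((Fintype.piFinset fun _ : Fin a.length => Finset.Ioo 0 p).filter
      fun m => ∀ i j : Fin a.length, i < j → m i < m j),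
    ∏ i, ((isgn (a.get i) : ZMod p) ^ m i * ((m i : ZMod p) ^ (a.get i).natAbs)⁻¹)

noncomputable def SgnSet (i j : ℕ) : Finset (List ℤ) :=
  ((Fintype.piFinset fun _ : Fin (i + 1) => Finset.Icc (-(i + j + 1 : ℤ)) (i + j + 1)).filter
      fun a => (∀ l, a l ≠ 0) ∧ ∑ l, |a l| = (i + j + 1 : ℤ)).image List.ofFn

/-
Reflecting a summation tuple, `(m₁, …, m_r) ↦ (p - m_r, …, p - m₁)`, is an involution of
`{0 < m₁ < ⋯ < m_r < p}`. Since `p - m ≡ -m` and `sgn^(p - m) = sgn · sgn^m` for odd `p`,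
it turns the summand of `Z_p(s_r, …, s₁)` into `(-1)^{wt 𝐬} sgn(𝐬)` times the summand of
`Z_p(s₁, …, s_r)`.
-/

lemma isgn_mul_self (x : ℤ) : isgn x * isgn x = 1 := by
  unfold isgn; split_ifs <;> norm_num

lemma pow_sub_of_mul_self_eq_one {M : Type*} [CommMonoid M] {ε : M} (hε : ε * ε = 1)
    {p k : ℕ} (ho : Odd p) (hk : k ≤ p) : ε ^ (p - k) = ε * ε ^ k := by
  obtain ⟨l, rfl⟩ := ho
  have hεp : ε ^ (2 * l + 1) = ε := by rw [pow_succ, pow_mul, sq, hε, one_pow, one_mul]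
  calc ε ^ (2 * l + 1 - k) = ε ^ (2 * l + 1 - k) * ε ^ k * ε ^ k := by
        rw [mul_assoc, ← mul_pow, hε, one_pow, mul_one]
    _ = ε * ε ^ k := by rw [← pow_add, Nat.sub_add_cancel hk, hεp]

def harmonicTerm (p : ℕ) (σ : ℤ) (k : ℕ) : ZMod p :=
  (isgn σ : ZMod p) ^ k * ((k : ZMod p) ^ σ.natAbs)⁻¹

lemma harmonicTerm_sub {p : ℕ} [Fact p.Prime] (ho : Odd p) (σ : ℤ) {k : ℕ} (hk : k ≤ p) :
    harmonicTerm p σ (p - k) = (-1) ^ σ.natAbs * isgn σ * harmonicTerm p σ k := by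
  have hε : (isgn σ : ZMod p) * isgn σ = 1 := by
    rw [← Int.cast_mul, isgn_mul_self, Int.cast_one]
  rw [harmonicTerm, harmonicTerm, Nat.cast_sub hk, ZMod.natCast_self, zero_sub, neg_pow,
    mul_inv, ← inv_pow, inv_neg_one, pow_sub_of_mul_self_eq_one hε ho hk]
  ring

def increasingTuples (n p : ℕ) : Finset (Fin n → ℕ) :=
  (Fintype.piFinset fun _ : Fin n => Ioo 0 p).filter fun m => ∀ i j, i < j → m i < m j

def ZpFin (p : ℕ) {n : ℕ} (s : Fin n → ℤ) : ZMod p :=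
  ∑ m ∈ increasingTuples n p, ∏ i, harmonicTerm p (s i) (m i)

lemma Zp_eq_ZpFin (p : ℕ) (a : List ℤ) : Zp p a = ZpFin p a.get := rfl

lemma ZpFin_cast (p : ℕ) {n n' : ℕ} (h : n = n') (s : Fin n' → ℤ) :
    ZpFin p (fun i => s (Fin.cast h i)) = ZpFin p s := by
  subst h; rfl

lemma Zp_ofFn (p : ℕ) {n : ℕ} (s : Fin n → ℤ) : Zp p (List.ofFn s) = ZpFin p s := by
  rw [Zp_eq_ZpFin, funext (List.get_ofFn s)]
  exact ZpFin_cast p _ s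

section Reflect

variable {n p : ℕ}

def reflect (p : ℕ) (m : Fin n → ℕ) : Fin n → ℕ := fun j => p - m j.rev

lemma reflect_mem {m : Fin n → ℕ} (hm : m ∈ increasingTuples n p) :
    reflect p m ∈ increasingTuples n p := by
  simp only [increasingTuples, reflect, mem_filter, Fintype.mem_piFinset, mem_Ioo] at hm ⊢
  obtain ⟨hbound, hinc⟩ := hm
  refine ⟨fun j => ?_, fun i j hij => ?_⟩
  · have := hbound j.rev
    omega
  · have := hinc _ _ (Fin.rev_lt_rev.mpr hij)
    have := (hbound j.rev).2
    omega

lemma reflect_reflect {m : Fin n → ℕ} (hm : m ∈ increasingTuples n p) :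
    reflect p (reflect p m) = m := by
  simp only [increasingTuples, mem_filter, Fintype.mem_piFinset, mem_Ioo] at hm
  funext j
  have := hm.1 j
  simp only [reflect, Fin.rev_rev]
  omega

lemma prod_harmonicTerm_reflect [Fact p.Prime] (ho : Odd p) (s : Fin n → ℤ) {m : Fin n → ℕ}
    (hm : ∀ j, m j ≤ p) :
    ∏ j, harmonicTerm p (s j.rev) (reflect p m j) =
      (-1) ^ (∑ j, (s j).natAbs) * (∏ j, (isgn (s j) : ZMod p)) *
        ∏ j, harmonicTerm p (s j) (m j) := by
  calc ∏ j : Fin n, harmonicTerm p (s j.rev) (p - m j.rev)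
      = ∏ j, harmonicTerm p (s j) (p - m j) :=
        Equiv.prod_comp Fin.revPerm fun j => harmonicTerm p (s j) (p - m j)
    _ = ∏ j, ((-1) ^ (s j).natAbs * isgn (s j) * harmonicTerm p (s j) (m j)) :=
        prod_congr rfl fun j _ => harmonicTerm_sub ho (s j) (hm j)
    _ = _ := by rw [prod_mul_distrib, prod_mul_distrib, prod_pow_eq_pow_sum]

theorem ZpFin_rev [Fact p.Prime] (ho : Odd p) (s : Fin n → ℤ) :
    ZpFin p (fun j => s j.rev) =
      (-1) ^ (∑ j, (s j).natAbs) * (∏ j, (isgn (s j) : ZMod p)) * ZpFin p s := by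
  rw [ZpFin, ZpFin, mul_sum]
  refine (sum_nbij' (reflect p) (reflect p) (fun _ => reflect_mem) (fun _ => reflect_mem)
    (fun _ => reflect_reflect) (fun _ => reflect_reflect) fun m hm => ?_).symm
  simp only [increasingTuples, mem_filter, Fintype.mem_piFinset, mem_Ioo] at hm
  exact (prod_harmonicTerm_reflect ho s fun j => (hm.1 j).2.le).symm

end Reflect

lemma List.reverse_ofFn {α : Type*} {n : ℕ} (f : Fin n → α) :
    (List.ofFn f).reverse = List.ofFn fun i => f i.rev := by
  refine List.ext_getElem (by simp) fun i h₁ h₂ => ?_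
  simp only [List.getElem_reverse, List.getElem_ofFn, List.length_ofFn, Fin.rev]
  rw [List.length_ofFn] at h₂
  congr 2
  omega

lemma sgnIdx_ofFn {n : ℕ} (s : Fin n → ℤ) : sgnIdx (List.ofFn s) = ∏ j, isgn (s j) := by
  rw [sgnIdx, List.map_ofFn, List.prod_ofFn]
  rfl

theorem Zp_reverse_ofFn {p n : ℕ} [Fact p.Prime] (ho : Odd p) (s : Fin n → ℤ) :
    Zp p (List.ofFn s).reverse =
      (-1 : ZMod p) ^ ((List.ofFn s).map Int.natAbs).sum * (sgnIdx (List.ofFn s) : ZMod p) *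
        Zp p (List.ofFn s) := by
  rw [List.reverse_ofFn, Zp_ofFn, Zp_ofFn, ZpFin_rev ho, sgnIdx_ofFn, List.map_ofFn,
    List.sum_ofFn, Int.cast_prod]
  rfl

theorem stmt_11_general (a : List ℤ)
    (p : ℕ) (hp : p.Prime) (ho : Odd p) :
    Zp p a.reverse =
      (-1 : ZMod p) ^ (a.map Int.natAbs).sum * (sgnIdx a : ZMod p) * Zp p a := by
  have := Fact.mk hp
  simpa only [List.ofFn_get] using Zp_reverse_ofFn ho a.get

/-- the reversal formula
`Z_p(s_r,…,s₁) = (−1)^{wt 𝐬}·sgn(𝐬)·Z_p(s₁,…,s_r)` in `ℤ/pℤ` for every odd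
prime `p` and every index `𝐬 ∈ 𝔻^r` with `r ≥ 1`. -/
theorem stmt_11 (a : List ℤ) (ha : a ≠ []) (h0 : ∀ x ∈ a, x ≠ 0)
    (p : ℕ) (hp : p.Prime) (ho : Odd p) :
    Zp p a.reverse =
      (-1 : ZMod p) ^ (a.map Int.natAbs).sum * (sgnIdx a : ZMod p) * Zp p a :=
  stmt_11_general a p hp ho
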